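/- Fix R > 0 real, ħ ∈ ℂ with ħ ≠ 0, and z ∈ ℂ. Let λ be a positive real-valued function on ℂ that is twice continuously real-differentiable near z, and let P : ℂ → ℂ be holomorphic near z. Define the 2×2 matrix-valued functions A₁(w) = ħ⁻¹·[[0, P(w)], [1, 0]] − (∂_w log λ(w))·diag(1, −1) and A₂(w) = R²ħ·[[0, λ(w)²], [λ(w)⁻²·conj(P(w)), 0]]. Then ∂_z A₂(z) − ∂_z̄ A₁(z) + [A₁(z), A₂(z)] = (∂_z̄ ∂_z log λ(z) − R²·(λ(z)² − λ(z)⁻²·|P(z)|²))·diag(1, −1). (This computes the curvature of the connection d + A₁ dz + A₂ dz̄ of the rescaled Hitchin family for SL(2,ℂ): the connection is flat precisely when λ satisfies the rescaled Hitchin equation ∂_z̄ ∂_z log λ = R²(λ² − λ⁻²|P|²).) -/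

import Mathlib

open Matrix Complex

attribute [local instance] Matrix.normedAddCommGroup Matrix.normedSpace

/-- The Wirtinger derivative `∂_z F(z) = ½(DF(z)(1) - i·DF(z)(i))`, where `DF(z)` is the
real Fréchet derivative. -/
noncomputable def dz {E : Type*} [NormedAddCommGroup E] [NormedSpace ℂ E]
    (F : ℂ → E) (z : ℂ) : E :=
  (2⁻¹ : ℂ) • (fderiv ℝ F z 1 - Complex.I • fderiv ℝ F z Complex.I)

/-- The Wirtinger derivative `∂_z̄ F(z) = ½(DF(z)(1) + i·DF(z)(i))`. -/
noncomputable def dzbar {E : Type*} [NormedAddCommGroup E] [NormedSpace ℂ E]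
    (F : ℂ → E) (z : ℂ) : E :=
  (2⁻¹ : ℂ) • (fderiv ℝ F z 1 + Complex.I • fderiv ℝ F z Complex.I)
/-! In the basis `e = [[0,1],[0,0]]`, `f = [[0,0],[1,0]]`, `h = diag(1,-1)` of `sl₂` and with
`a = ∂_z log λ`, we have `A₁ = ħ⁻¹(P e + f) - a h` and `A₂ = R²ħ(λ² e + λ⁻² P̄ f)`.
Since `P` is holomorphic, `∂_z̄ A₁ = -(∂_z̄ a) h`, and `∂_z P̄ = conj (∂_z̄ P) = 0` together with
`∂_z λⁿ = n λⁿ a` gives `∂_z A₂ = 2aR²ħ(λ² e - λ⁻² P̄ f)`, which `[h, e] = 2e`, `[h, f] = -2f`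
show to be cancelled by `[-a h, A₂]`. What is left is `[ħ⁻¹(P e + f), A₂] = R²(λ⁻²|P|² - λ²) h`,
by `[e, f] = h`. -/

open ComplexConjugate

section Wirtinger

variable {E : Type*} [NormedAddCommGroup E] [NormedSpace ℂ E] {z : ℂ}

@[simp]
lemma dz_const (c : E) : dz (fun _ => c) z = 0 := by simp [dz]

@[simp]
lemma dzbar_const (c : E) : dzbar (fun _ => c) z = 0 := by simp [dzbar]

lemma dz_const_smul (c : ℂ) (F : ℂ → E) : dz (fun w => c • F w) z = c • dz F z := by
  rw [show (fun w => c • F w) = c • F from rfl, dz, dz, fderiv_const_smul_field]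
  simp only [FunLike.coe_smul, Pi.smul_apply]
  module

lemma dzbar_neg (F : ℂ → E) : dzbar (fun w => -F w) z = -dzbar F z := by
  simp only [dzbar, fderiv_fun_neg, _root_.neg_apply]
  module

lemma ContDiffAt.differentiableAt_dz {F : ℂ → E} (hF : ContDiffAt ℝ 2 F z) :
    DifferentiableAt ℝ (dz F) z := by
  have hD : DifferentiableAt ℝ (fderiv ℝ F) z :=
    (hF.fderiv_right (m := 1) (by norm_num)).differentiableAt (by norm_num)
  unfold dz
  fun_prop

end Wirtinger

section Scalar

variable {f g : ℂ → ℂ} {z : ℂ}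

lemma dz_mul (hf : DifferentiableAt ℝ f z) (hg : DifferentiableAt ℝ g z) :
    dz (fun w => f w * g w) z = dz f z * g z + f z * dz g z := by
  simp only [dz, fderiv_fun_mul hf hg, _root_.add_apply, _root_.smul_apply, smul_eq_mul]
  ring

lemma dz_comp (hg : DifferentiableAt ℂ g (f z)) (hf : DifferentiableAt ℝ f z) :
    dz (fun w => g (f w)) z = deriv g (f z) * dz f z := by
  have h : HasFDerivAt (fun w => g (f w))
      ((fderiv ℂ g (f z)).restrictScalars ℝ ∘L fderiv ℝ f z) z :=
    (hg.hasFDerivAt.restrictScalars ℝ).comp z hf.hasFDerivAt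
  simp only [dz, h.fderiv, ContinuousLinearMap.comp_apply,
    ContinuousLinearMap.coe_restrictScalars', fderiv_eq_smul_deriv, smul_eq_mul]
  ring

lemma dz_ofReal_comp {u : ℂ → ℝ} {φ : ℝ → ℝ} {φ' : ℝ} (hφ : HasDerivAt φ φ' (u z))
    (hu : DifferentiableAt ℝ u z) :
    dz (fun w => (φ (u w) : ℂ)) z = φ' * dz (fun w => (u w : ℂ)) z := by
  have hcast : HasFDerivAt (fun w => (u w : ℂ)) (ofRealCLM ∘L fderiv ℝ u z) z :=
    ofRealCLM.hasFDerivAt.comp z hu.hasFDerivAt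
  have h : HasFDerivAt (fun w => (φ (u w) : ℂ)) (ofRealCLM ∘L (φ' • fderiv ℝ u z)) z :=
    ofRealCLM.hasFDerivAt.comp z (hφ.comp_hasFDerivAt z hu.hasFDerivAt)
  simp only [dz, h.fderiv, hcast.fderiv, ContinuousLinearMap.comp_apply, _root_.smul_apply,
    ofRealCLM_apply, smul_eq_mul, ofReal_mul]
  ring

lemma dz_conj : dz (fun w => conj (f w)) z = conj (dzbar f z) := by
  have h := (conjCLE : ℂ ≃L[ℝ] ℂ).comp_fderiv (f := f) (x := z)
  simp only [Function.comp_def, conjCLE_apply] at h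
  simp only [dz, dzbar, h, ContinuousLinearMap.comp_apply, ContinuousLinearEquiv.coe_coe,
    conjCLE_apply, smul_eq_mul, map_mul, map_inv₀, map_ofNat, map_add, conj_I]
  ring

lemma dzbar_eq_zero_of_differentiableAt (hf : DifferentiableAt ℂ f z) : dzbar f z = 0 := by
  simp only [dzbar, (hf.hasFDerivAt.restrictScalars ℝ).fderiv,
    ContinuousLinearMap.coe_restrictScalars', fderiv_eq_smul_deriv, smul_eq_mul]
  linear_combination (2⁻¹ * deriv f z) * I_mul_I

end Scalar

section Matrix

variable {z : ℂ} {a b c d : ℂ → ℂ}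

lemma dz_matrix_apply {m n : Type*} [Fintype m] [Fintype n] {F : ℂ → Matrix m n ℂ}
    (hF : ∀ i j, DifferentiableAt ℝ (fun w => F w i j) z) (i : m) (j : n) :
    dz F z i j = dz (fun w => F w i j) z := by
  have hrow : ∀ i, DifferentiableAt ℝ (fun w => F w i) z := fun i =>
    differentiableAt_pi.2 (hF i)
  simp only [dz, Matrix.smul_apply, Matrix.sub_apply, fderiv_apply (differentiableAt_pi.2 hrow),
    fderiv_apply (hrow i), ContinuousLinearMap.comp_apply, ContinuousLinearMap.proj_apply]
  rfl

lemma dzbar_matrix_apply {m n : Type*} [Fintype m] [Fintype n] {F : ℂ → Matrix m n ℂ}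
    (hF : ∀ i j, DifferentiableAt ℝ (fun w => F w i j) z) (i : m) (j : n) :
    dzbar F z i j = dzbar (fun w => F w i j) z := by
  have hrow : ∀ i, DifferentiableAt ℝ (fun w => F w i) z := fun i =>
    differentiableAt_pi.2 (hF i)
  simp only [dzbar, Matrix.smul_apply, Matrix.add_apply, fderiv_apply (differentiableAt_pi.2 hrow),
    fderiv_apply (hrow i), ContinuousLinearMap.comp_apply, ContinuousLinearMap.proj_apply]
  rfl

lemma differentiableAt_matrix_fin_two_apply (ha : DifferentiableAt ℝ a z)
    (hb : DifferentiableAt ℝ b z) (hc : DifferentiableAt ℝ c z) (hd : DifferentiableAt ℝ d z)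
    (i j : Fin 2) :
    DifferentiableAt ℝ (fun w => (!![a w, b w; c w, d w] : Matrix (Fin 2) (Fin 2) ℂ) i j) z := by
  fin_cases i <;> fin_cases j <;> assumption

lemma dz_matrix_fin_two (ha : DifferentiableAt ℝ a z) (hb : DifferentiableAt ℝ b z)
    (hc : DifferentiableAt ℝ c z) (hd : DifferentiableAt ℝ d z) :
    dz (fun w => !![a w, b w; c w, d w]) z = !![dz a z, dz b z; dz c z, dz d z] := by
  ext i j
  rw [dz_matrix_apply (differentiableAt_matrix_fin_two_apply ha hb hc hd)]
  fin_cases i <;> fin_cases j <;> rfl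

lemma dzbar_matrix_fin_two (ha : DifferentiableAt ℝ a z) (hb : DifferentiableAt ℝ b z)
    (hc : DifferentiableAt ℝ c z) (hd : DifferentiableAt ℝ d z) :
    dzbar (fun w => !![a w, b w; c w, d w]) z =
      !![dzbar a z, dzbar b z; dzbar c z, dzbar d z] := by
  ext i j
  rw [dzbar_matrix_apply (differentiableAt_matrix_fin_two_apply ha hb hc hd)]
  fin_cases i <;> fin_cases j <;> rfl

end Matrix

section Hitchin

variable {z : ℂ} {lam : ℂ → ℝ}

lemma dz_ofReal_zpow (n : ℤ) (hlam : DifferentiableAt ℝ lam z) (hpos : 0 < lam z) :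
    dz (fun w => (lam w : ℂ) ^ n) z
      = n * (lam z : ℂ) ^ n * dz (fun w => (Real.log (lam w) : ℂ)) z := by
  have hΛ : DifferentiableAt ℝ (fun w => (lam w : ℂ)) z := ofRealCLM.differentiableAt.comp z hlam
  have hΛz : (lam z : ℂ) ≠ 0 := ofReal_ne_zero.2 hpos.ne'
  rw [dz_comp (g := fun x => x ^ n) (differentiableAt_zpow.2 (Or.inl hΛz)) hΛ, deriv_zpow,
    dz_ofReal_comp (Real.hasDerivAt_log hpos.ne') hlam, zpow_sub_one₀ hΛz, ofReal_inv]
  ring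

/-- `L` plays the role of `log λ`. -/
noncomputable def hitchinA₁ (hbar : ℂ) (P L : ℂ → ℂ) (w : ℂ) : Matrix (Fin 2) (Fin 2) ℂ :=
  hbar⁻¹ • !![0, P w; 1, 0] - dz L w • !![1, 0; 0, -1]

noncomputable def hitchinA₂ (R : ℝ) (hbar : ℂ) (lam : ℂ → ℝ) (P : ℂ → ℂ) (w : ℂ) :
    Matrix (Fin 2) (Fin 2) ℂ :=
  ((R : ℂ) ^ 2 * hbar) • !![0, (lam w : ℂ) ^ 2; (lam w : ℂ) ^ (-2 : ℤ) * conj (P w), 0]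

lemma dzbar_hitchinA₁ {hbar : ℂ} {P L : ℂ → ℂ} (hP : DifferentiableAt ℂ P z)
    (hL : DifferentiableAt ℝ (dz L) z) :
    dzbar (hitchinA₁ hbar P L) z = -dzbar (dz L) z • !![1, 0; 0, -1] := by
  have hA₁ : hitchinA₁ hbar P L = fun w => !![-dz L w, hbar⁻¹ * P w; hbar⁻¹, dz L w] := by
    funext w
    ext i j
    fin_cases i <;> fin_cases j <;> simp [hitchinA₁]
  rw [hA₁, dzbar_matrix_fin_two hL.fun_neg ((hP.const_mul _).restrictScalars ℝ)
    (differentiableAt_const _) hL, dzbar_neg, dzbar_const,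
    dzbar_eq_zero_of_differentiableAt (hP.const_mul _)]
  ext i j
  fin_cases i <;> fin_cases j <;> simp

lemma dz_hitchinA₂ (R : ℝ) (hbar : ℂ) {P : ℂ → ℂ} (hlam : DifferentiableAt ℝ lam z)
    (hpos : 0 < lam z) (hP : DifferentiableAt ℂ P z) :
    dz (hitchinA₂ R hbar lam P) z = ((R : ℂ) ^ 2 * hbar) •
      !![0, 2 * (lam z : ℂ) ^ 2 * dz (fun w => (Real.log (lam w) : ℂ)) z;
        -2 * (lam z : ℂ) ^ (-2 : ℤ) * conj (P z) * dz (fun w => (Real.log (lam w) : ℂ)) z, 0] := by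
  have hΛ : DifferentiableAt ℝ (fun w => (lam w : ℂ)) z := ofRealCLM.differentiableAt.comp z hlam
  have hΛz : (lam z : ℂ) ≠ 0 := ofReal_ne_zero.2 hpos.ne'
  have hΛinv2 : DifferentiableAt ℝ (fun w => (lam w : ℂ) ^ (-2 : ℤ)) z :=
    ((differentiableAt_zpow.2 (Or.inl hΛz)).restrictScalars ℝ).fun_comp' z hΛ
  have hPbar : DifferentiableAt ℝ (fun w => conj (P w)) z :=
    conjCLE.differentiableAt.comp z (hP.restrictScalars ℝ)
  have hsq : dz (fun w => (lam w : ℂ) ^ 2) z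
      = 2 * (lam z : ℂ) ^ 2 * dz (fun w => (Real.log (lam w) : ℂ)) z := by
    simpa using dz_ofReal_zpow 2 hlam hpos
  unfold hitchinA₂
  rw [dz_const_smul, dz_matrix_fin_two (differentiableAt_const _) (hΛ.fun_pow 2)
    (hΛinv2.fun_mul hPbar) (differentiableAt_const _), dz_const, hsq, dz_mul hΛinv2 hPbar,
    dz_ofReal_zpow _ hlam hpos, dz_conj, dzbar_eq_zero_of_differentiableAt hP, map_zero]
  ring_nf

end Hitchin

theorem hitchin_curvature_SL2_general (R : ℝ) (hbar : ℂ) (hh : hbar ≠ 0) (z : ℂ)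
    (lam : ℂ → ℝ) (hlampos : ∀ w, 0 < lam w)
    (hlam : ∀ᶠ w in nhds z, ContDiffAt ℝ 2 lam w)
    (P : ℂ → ℂ) (hP : ∀ᶠ w in nhds z, DifferentiableAt ℂ P w)
    (logLam : ℂ → ℂ) (hlog : logLam = fun w => (Real.log (lam w) : ℂ))
    (A₁ A₂ : ℂ → Matrix (Fin 2) (Fin 2) ℂ)
    (hA₁ : A₁ = fun w => hbar⁻¹ • (!![0, P w; 1, 0] : Matrix (Fin 2) (Fin 2) ℂ)
      - dz logLam w • (!![1, 0; 0, -1] : Matrix (Fin 2) (Fin 2) ℂ))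
    (hA₂ : A₂ = fun w => ((R : ℂ) ^ 2 * hbar) •
      (!![0, ((lam w : ℂ)) ^ 2; ((lam w : ℂ)) ^ (-2 : ℤ) * (starRingEnd ℂ) (P w), 0] :
        Matrix (Fin 2) (Fin 2) ℂ)) :
    dz A₂ z - dzbar A₁ z + (A₁ z * A₂ z - A₂ z * A₁ z)
      = (dzbar (fun w => dz logLam w) z
          - (R : ℂ) ^ 2 * (((lam z : ℂ)) ^ 2
              - ((lam z : ℂ)) ^ (-2 : ℤ) * ((‖P z‖ : ℝ) : ℂ) ^ 2)) •
        (!![1, 0; 0, -1] : Matrix (Fin 2) (Fin 2) ℂ) := by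
  have hlamz : ContDiffAt ℝ 2 lam z := hlam.self_of_nhds
  have hpos : 0 < lam z := hlampos z
  have hlogLam : ContDiffAt ℝ 2 logLam z := hlog ▸
    ofRealCLM.contDiff.contDiffAt.comp z ((Real.contDiffAt_log.2 hpos.ne').comp z hlamz)
  have hlamz' : (lam z : ℂ) ≠ 0 := ofReal_ne_zero.2 hpos.ne'
  have hnorm : ((‖P z‖ : ℝ) : ℂ) ^ 2 = P z * conj (P z) := by
    rw [mul_conj, ← ofReal_pow, Complex.sq_norm]
  rw [show A₁ = hitchinA₁ hbar P logLam from hA₁, show A₂ = hitchinA₂ R hbar lam P from hA₂,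
    dz_hitchinA₂ R hbar (hlamz.differentiableAt two_ne_zero) hpos hP.self_of_nhds,
    dzbar_hitchinA₁ hP.self_of_nhds hlogLam.differentiableAt_dz, hnorm, ← hlog]
  ext i j
  fin_cases i <;> fin_cases j <;> simp [hitchinA₁, hitchinA₂] <;> field_simp <;> ring

/-- Curvature of the rescaled SL(2,ℂ) Hitchin-family connection `d + A₁ dz + A₂ dz̄`:
`∂_z A₂ - ∂_z̄ A₁ + [A₁, A₂]` equals
`(∂_z̄ ∂_z log λ - R²(λ² - λ⁻²|P|²))·diag(1,-1)`. -/
theorem hitchin_curvature_SL2 (R : ℝ) (hR : 0 < R) (hbar : ℂ) (hh : hbar ≠ 0) (z : ℂ)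
    (lam : ℂ → ℝ) (hlampos : ∀ w, 0 < lam w)
    (hlam : ∀ᶠ w in nhds z, ContDiffAt ℝ 2 lam w)
    (P : ℂ → ℂ) (hP : ∀ᶠ w in nhds z, DifferentiableAt ℂ P w)
    (logLam : ℂ → ℂ) (hlog : logLam = fun w => (Real.log (lam w) : ℂ))
    (A₁ A₂ : ℂ → Matrix (Fin 2) (Fin 2) ℂ)
    (hA₁ : A₁ = fun w => hbar⁻¹ • (!![0, P w; 1, 0] : Matrix (Fin 2) (Fin 2) ℂ)
      - dz logLam w • (!![1, 0; 0, -1] : Matrix (Fin 2) (Fin 2) ℂ))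
    (hA₂ : A₂ = fun w => ((R : ℂ) ^ 2 * hbar) •
      (!![0, ((lam w : ℂ)) ^ 2; ((lam w : ℂ)) ^ (-2 : ℤ) * (starRingEnd ℂ) (P w), 0] :
        Matrix (Fin 2) (Fin 2) ℂ)) :
    dz A₂ z - dzbar A₁ z + (A₁ z * A₂ z - A₂ z * A₁ z)
      = (dzbar (fun w => dz logLam w) z
          - (R : ℂ) ^ 2 * (((lam z : ℂ)) ^ 2
              - ((lam z : ℂ)) ^ (-2 : ℤ) * ((‖P z‖ : ℝ) : ℂ) ^ 2)) •
        (!![1, 0; 0, -1] : Matrix (Fin 2) (Fin 2) ℂ) :=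
  hitchin_curvature_SL2_general R hbar hh z lam hlampos hlam P hP logLam hlog A₁ A₂ hA₁ hA₂
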